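/- Let α > 0, K ≥ 1, and let E = {x_1, …, x_N} be a sorted 2d Pareto front. Let (P₁, …, P_K, c₁, …, c_K) be a local minimum of K-α-Med2dPF on E. Then every cluster is an interval cluster: for each k ∈ [1, K] there exist indices i ≤ i' such that P_k = C_{i,i'} = {x_j : i ≤ j ≤ i'}. -/
import Mathlib


open scoped Classical

/-- Points of the plane with the Euclidean structure. -/
abbrev E2 := EuclideanSpace ℝ (Fin 2)

/-- `(P, c)` is a local minimum of K-α-Med2dPF on `E`: the `P k` form a partition of `E`
into `K` nonempty subsets, each `c k ∈ P k` is an `α`-medoid of `P k`, and every point is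
at least as close to the medoid of its own cluster as to any other medoid. -/
def LocalMinK (α : ℝ) (E : Finset E2) {K : ℕ} (P : Fin K → Finset E2) (c : Fin K → E2) :
    Prop :=
  (∀ k, (P k).Nonempty) ∧
  (∀ k k', k ≠ k' → Disjoint (P k) (P k')) ∧
  Finset.univ.biUnion P = E ∧
  (∀ k, c k ∈ P k) ∧
  (∀ k, ∀ y ∈ P k, ∑ z ∈ P k, dist z (c k) ^ α ≤ ∑ z ∈ P k, dist z y ^ α) ∧
  (∀ k k', k ≠ k' → ∀ p ∈ P k, dist p (c k) ≤ dist p (c k'))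


lemma distsq (p q : E2) : dist p q ^ 2 = (p 0 - q 0) ^ 2 + (p 1 - q 1) ^ 2 := by
  rw [EuclideanSpace.dist_eq, Real.sq_sqrt (by positivity)]
  simp [Fin.sum_univ_two, Real.dist_eq, sq_abs]

lemma core (p q a b : E2) (h1 : p 0 < q 0) (h2 : q 1 < p 1) (h3 : a 0 < b 0)
    (h4 : b 1 < a 1) :
    dist p a ^ 2 - dist p b ^ 2 < dist q a ^ 2 - dist q b ^ 2 := by
  rw [distsq, distsq, distsq, distsq]
  nlinarith [mul_pos (sub_pos.2 h1) (sub_pos.2 h3), mul_pos (sub_pos.2 h2) (sub_pos.2 h4)]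

/-- Every cluster of a local minimum of K-α-Med2dPF on a sorted 2d Pareto front is an
interval cluster `C_{i,i'} = {x j : i ≤ j ≤ i'}`. -/
theorem localMinK_interval (α : ℝ) (hα : 0 < α) (K : ℕ) (hK : 1 ≤ K)
    (N : ℕ) (x : ℕ → E2)
    (hsort : ∀ i j, 1 ≤ i → i < j → j ≤ N → x i 0 < x j 0 ∧ x j 1 < x i 1)
    (P : Fin K → Finset E2) (c : Fin K → E2)
    (hloc : LocalMinK α ((Finset.Icc 1 N).image x) P c) :
    ∀ k, ∃ i i', 1 ≤ i ∧ i ≤ i' ∧ i' ≤ N ∧ P k = (Finset.Icc i i').image x := by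
  obtain ⟨hne, hdisj, hunion, hmem, _hmed, hclose⟩ := hloc
  have hsub : ∀ k, P k ⊆ (Finset.Icc 1 N).image x := by
    intro k
    rw [← hunion]
    exact Finset.subset_biUnion_of_mem P (Finset.mem_univ k)
  have hsq : ∀ {u v w : E2}, dist u v ≤ dist u w → dist u v ^ 2 ≤ dist u w ^ 2 :=
    fun h => pow_le_pow_left₀ dist_nonneg h 2
  intro k
  -- convexity of the index set of P k
  have hconv : ∀ j1 j2 j3, 1 ≤ j1 → j1 ≤ j2 → j2 ≤ j3 → j3 ≤ N →
      x j1 ∈ P k → x j3 ∈ P k → x j2 ∈ P k := by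
    intro j1 j2 j3 hj1 h12 h23 hj3 hx1 hx3
    rcases eq_or_lt_of_le h12 with rfl | h12
    · exact hx1
    rcases eq_or_lt_of_le h23 with rfl | h23
    · exact hx3
    have hj2l : 1 ≤ j2 := le_trans hj1 (le_of_lt h12)
    have hj2r : j2 ≤ N := le_trans (le_of_lt h23) hj3
    have hx2E : x j2 ∈ Finset.univ.biUnion P := by
      rw [hunion]
      exact Finset.mem_image.2 ⟨j2, Finset.mem_Icc.2 ⟨hj2l, hj2r⟩, rfl⟩
    obtain ⟨k', -, hx2⟩ := Finset.mem_biUnion.1 hx2E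
    by_cases hkk : k' = k
    · exact hkk ▸ hx2
    exfalso
    obtain ⟨m, hm, hcm⟩ := Finset.mem_image.1 (hsub k (hmem k))
    obtain ⟨m', hm', hcm'⟩ := Finset.mem_image.1 (hsub k' (hmem k'))
    rw [Finset.mem_Icc] at hm hm'
    have hmm : m ≠ m' := by
      rintro rfl
      exact Finset.disjoint_left.1 (hdisj k k' (fun h => hkk h.symm))
        (hcm ▸ hmem k) (hcm' ▸ hmem k')
    have h_a : dist (x j1) (x m) ≤ dist (x j1) (x m') := by
      rw [hcm, hcm']; exact hclose k k' (fun h => hkk h.symm) _ hx1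
    have h_c : dist (x j3) (x m) ≤ dist (x j3) (x m') := by
      rw [hcm, hcm']; exact hclose k k' (fun h => hkk h.symm) _ hx3
    have h_b : dist (x j2) (x m') ≤ dist (x j2) (x m) := by
      rw [hcm, hcm']; exact hclose k' k hkk _ hx2
    rcases lt_or_gt_of_ne hmm with hlt | hlt
    · -- m < m' : compare j2 and j3
      have ha := hsort m m' hm.1 hlt hm'.2
      have hpq := hsort j2 j3 hj2l h23 hj3
      have := core (x j2) (x j3) (x m) (x m') hpq.1 hpq.2 ha.1 ha.2
      have h1 := hsq h_c
      have h2 := hsq h_b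
      linarith
    · -- m' < m : compare j1 and j2
      have ha := hsort m' m hm'.1 hlt hm.2
      have hpq := hsort j1 j2 hj1 h12 hj2r
      have := core (x j1) (x j2) (x m') (x m) hpq.1 hpq.2 ha.1 ha.2
      have h1 := hsq h_a
      have h2 := hsq h_b
      linarith
  -- index set
  set S : Finset ℕ := (Finset.Icc 1 N).filter (fun j => x j ∈ P k) with hSdef
  obtain ⟨p0, hp0⟩ := hne k
  obtain ⟨j0, hj0, hxj0⟩ := Finset.mem_image.1 (hsub k hp0)
  have hS : S.Nonempty := ⟨j0, Finset.mem_filter.2 ⟨hj0, hxj0 ▸ hp0⟩⟩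
  have hmin := S.min'_mem hS
  have hmax := S.max'_mem hS
  rw [Finset.mem_filter, Finset.mem_Icc] at hmin hmax
  refine ⟨S.min' hS, S.max' hS, hmin.1.1, S.min'_le _ (S.max'_mem hS), hmax.1.2, ?_⟩
  apply Finset.Subset.antisymm
  · intro p hp
    obtain ⟨j, hj, hxj⟩ := Finset.mem_image.1 (hsub k hp)
    have hjS : j ∈ S := Finset.mem_filter.2 ⟨hj, hxj ▸ hp⟩
    exact Finset.mem_image.2 ⟨j, Finset.mem_Icc.2 ⟨S.min'_le _ hjS, S.le_max' _ hjS⟩, hxj⟩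
  · intro p hp
    obtain ⟨j, hj, hxj⟩ := Finset.mem_image.1 hp
    rw [Finset.mem_Icc] at hj
    exact hxj ▸ hconv (S.min' hS) j (S.max' hS) hmin.1.1 hj.1 hj.2 hmax.1.2
      hmin.2 hmax.2
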